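/- Bound on the complexity root: let d > 0, C > 0, n ≥ 1, and define φ(σ) = σ·√d·(√C + √π + √(ln(1/min(σ,1)))) for σ > 0. Then the unique positive solution σ* of φ(σ)/σ = √n·σ satisfies n·σ*² ≤ d·(2(√C + √π)² + max(0, ln(n/((√C + √π)²·d)))). -/
import Mathlib


open Real

/-- Bound on the complexity root: if `σ* > 0` solves
`√n σ = √d (√C + √π + √(ln(1/min(σ,1))))`, then
`n σ*² ≤ d (2(√C+√π)² + max 0 (ln(n/((√C+√π)² d))))`. -/
theorem complexity_root_bound (d C n σstar : ℝ)
    (hd : 0 < d) (hC : 0 < C) (hn : 1 ≤ n) (hσ : 0 < σstar)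
    (hroot : Real.sqrt n * σstar
      = Real.sqrt d * (Real.sqrt C + Real.sqrt π +
          Real.sqrt (Real.log (1 / min σstar 1)))) :
    n * σstar ^ 2
      ≤ d * (2 * (Real.sqrt C + Real.sqrt π) ^ 2 +
          max 0 (Real.log (n / ((Real.sqrt C + Real.sqrt π) ^ 2 * d)))) := by
  set a := Real.sqrt C + Real.sqrt π with ha_def
  set L := Real.sqrt (Real.log (1 / min σstar 1)) with hL_def
  have hπ : 0 < Real.sqrt π := Real.sqrt_pos.mpr Real.pi_pos
  have ha : 0 < a := add_pos_of_nonneg_of_pos (Real.sqrt_nonneg C) hπ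
  have hL0 : 0 ≤ L := Real.sqrt_nonneg _
  have hn0 : (0:ℝ) ≤ n := by linarith
  have hkey : n * σstar ^ 2 = d * (a + L) ^ 2 := by
    have h := congrArg (· ^ 2) hroot
    simp only [mul_pow] at h
    rwa [Real.sq_sqrt hn0, Real.sq_sqrt hd.le] at h
  have hMnn : (0:ℝ) ≤ max 0 (Real.log (n / (a ^ 2 * d))) := le_max_left 0 _
  by_cases h1 : 1 ≤ σstar
  · have hmin : min σstar 1 = 1 := min_eq_right h1
    have hL : L = 0 := by
      rw [hL_def, hmin]
      simp
    rw [hL] at hkey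
    rw [hkey]
    have h2 : (a + 0) ^ 2 ≤ 2 * a ^ 2 + max 0 (Real.log (n / (a ^ 2 * d))) := by
      nlinarith [sq_nonneg a, hMnn]
    exact mul_le_mul_of_nonneg_left h2 hd.le
  · push_neg at h1
    have hmin : min σstar 1 = σstar := min_eq_left h1.le
    have hlog0 : 0 ≤ Real.log (1 / σstar) :=
      Real.log_nonneg (one_le_one_div hσ h1.le)
    have hL2 : L ^ 2 = Real.log (1 / σstar) := by
      rw [hL_def, hmin, Real.sq_sqrt hlog0]
    have h2L : 2 * L ^ 2 = Real.log (1 / σstar ^ 2) := by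
      rw [hL2, one_div, one_div, Real.log_inv, Real.log_inv, Real.log_pow]
      push_cast
      ring
    have hdiv : 1 / σstar ^ 2 ≤ n / (a ^ 2 * d) := by
      rw [div_le_div_iff₀ (by positivity) (by positivity)]
      nlinarith [hkey, hL0, ha.le, hd.le, mul_nonneg hd.le (mul_nonneg ha.le hL0)]
    have hloglog : Real.log (1 / σstar ^ 2) ≤ Real.log (n / (a ^ 2 * d)) :=
      Real.log_le_log (by positivity) hdiv
    have hM : 2 * L ^ 2 ≤ max 0 (Real.log (n / (a ^ 2 * d))) := by
      rw [h2L]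
      exact le_trans hloglog (le_max_right _ _)
    rw [hkey]
    have h2 : (a + L) ^ 2 ≤ 2 * a ^ 2 + max 0 (Real.log (n / (a ^ 2 * d))) := by
      nlinarith [sq_nonneg (a - L), hM]
    exact mul_le_mul_of_nonneg_left h2 hd.le
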